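/- For d ≥ 1 and n ≥ 2, the number N_d(n) of (n, dn-1)-core partitions with distinct parts satisfies N_d(1)=1, N_d(2)=d, and N_d(n)=N_d(n-1)+d·N_d(n-2) for n ≥ 3. -/

import Mathlib

def hook (Y : YoungDiagram) (i j : ℕ) : ℕ :=
  (Y.rowLen i - j) + (Y.colLen j - i) - 1

def IsCore (Y : YoungDiagram) (t : ℕ) : Prop :=
  ∀ c ∈ Y.cells, ¬ (t ∣ hook Y c.1 c.2)

def DistinctParts (Y : YoungDiagram) : Prop :=
  ∀ i : ℕ, 0 < Y.rowLen (i + 1) → Y.rowLen (i + 1) < Y.rowLen i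

def betaSet (Y : YoungDiagram) : Finset ℕ :=
  (Finset.range (Y.colLen 0)).image (fun i => Y.rowLen i + (Y.colLen 0 - 1 - i))

noncomputable def Ncount (d n : ℕ) : ℕ :=
  {Y : YoungDiagram | DistinctParts Y ∧ IsCore Y n ∧ IsCore Y (d * n - 1)}.ncard

/-!
A partition is determined by its beta-set `B`, the hook lengths of its first column. The hook
lengths in row `i` are the differences `β i - y` with `y < β i` and `y ∉ B`, so the partition is a
`t`-core iff `B` is closed under `x ↦ x - t`; distinct parts mean that `B` has no two consecutive
elements. For an `(n, d n - 1)`-core with distinct parts these conditions force `B ⊆ [1, d n - 2]`,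
so `B` is an `n`-abacus: runner `r` (`1 ≤ r < n`) carries an initial segment of at most `d` beads,
adjacent runners are never both nonempty and the last runner carries fewer than `d` beads. A word
of such bead counts starts either with an empty runner or with a nonempty one followed by an empty
one, which gives `N(n) = N(n - 1) + d N(n - 2)`.
-/

open Finset

theorem Fin.add_sub_le_of_strictMono {k : ℕ} {f : Fin k → ℕ} (hf : StrictMono f) {a b : Fin k}
    (hab : a ≤ b) : f a + (b - a : ℕ) ≤ f b := by
  obtain ⟨n, hn⟩ := Nat.exists_eq_add_of_le (Fin.le_def.1 hab)
  induction n generalizing b with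
  | zero => simp [Fin.ext hn]
  | succ n ih =>
    have hlt : (⟨a + n, by omega⟩ : Fin k) < b := Fin.lt_def.2 (by simp; omega)
    have := ih (b := ⟨a + n, by omega⟩) (Fin.le_def.2 (by simp)) rfl
    have := hf hlt
    simp only at *
    omega

theorem Nat.eq_and_eq_of_add_mul_eq {n a b j j' : ℕ} (ha : a < n) (hb : b < n)
    (h : a + j * n = b + j' * n) : a = b ∧ j = j' := by
  have hn : 0 < n := by omega
  have hmod := congrArg (· % n) h
  have hdiv := congrArg (· / n) h
  simp only [Nat.add_mul_mod_self_right, Nat.mod_eq_of_lt ha, Nat.mod_eq_of_lt hb] at hmod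
  simp only [Nat.add_mul_div_right _ _ hn, Nat.div_eq_of_lt ha, Nat.div_eq_of_lt hb] at hdiv
  omega

theorem Nat.exists_forall_iff_lt {P : ℕ → Prop} (hP : ∀ j, P (j + 1) → P j) (hex : ∃ j, ¬ P j) :
    ∃ a, ∀ j, P j ↔ j < a := by
  classical
  have hanti : Antitone P := antitone_nat_of_succ_le hP
  refine ⟨Nat.find hex, fun j => ⟨fun hj => ?_, fun hj => not_not.1 (Nat.find_min hex hj)⟩⟩
  by_contra hle
  exact Nat.find_spec hex (hanti (not_lt.1 hle) hj)

def SubClosed (t : ℕ) (B : Finset ℕ) : Prop := ∀ x ∈ B, t ≤ x → x - t ∈ B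

def ConsecutiveFree (B : Finset ℕ) : Prop := ∀ x ∈ B, x + 1 ∉ B

theorem SubClosed.sub_mul_mem {t : ℕ} {B : Finset ℕ} (hB : SubClosed t B) {x : ℕ} (hx : x ∈ B) :
    ∀ {m : ℕ}, m * t ≤ x → x - m * t ∈ B
  | 0, _ => by simpa using hx
  | m + 1, hm => by
    rw [Nat.succ_mul] at hm ⊢
    rw [← Nat.sub_sub]
    exact hB _ (hB.sub_mul_mem hx (by omega)) (by omega)

namespace YoungDiagram

variable {Y : YoungDiagram} {i i' j w x t : ℕ}

/-- The beta-number of row `i`; for `i < Y.colLen 0` it is the hook length `hook Y i 0`. -/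
def beta (Y : YoungDiagram) (i : ℕ) : ℕ := Y.rowLen i + (Y.colLen 0 - 1 - i)

/-- Enumerates the complement of `betaSet Y` increasingly (`notMem_betaSet_iff`). -/
def nonBeta (Y : YoungDiagram) (j : ℕ) : ℕ := j + (Y.colLen 0 - Y.colLen j)

theorem mem_betaSet : x ∈ betaSet Y ↔ ∃ i < Y.colLen 0, Y.beta i = x := by
  simp [betaSet, beta]

theorem lt_colLen_zero_iff : i < Y.colLen 0 ↔ 0 < Y.rowLen i := by
  rw [← mem_iff_lt_colLen, mem_iff_lt_rowLen]

theorem beta_lt_beta (h : i < i') (h' : i' < Y.colLen 0) : Y.beta i' < Y.beta i := by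
  have := Y.rowLen_anti i i' h.le
  unfold beta
  omega

theorem zero_notMem_betaSet : 0 ∉ betaSet Y := by
  rw [mem_betaSet]
  rintro ⟨i, hi, h⟩
  have := lt_colLen_zero_iff.1 hi
  unfold beta at h
  omega

theorem colLen_le_colLen_zero (j : ℕ) : Y.colLen j ≤ Y.colLen 0 :=
  Y.colLen_anti 0 j j.zero_le

theorem mem_iff_nonBeta_lt_beta (hi : i < Y.colLen 0) : (i, j) ∈ Y ↔ Y.nonBeta j < Y.beta i := by
  have hc := colLen_le_colLen_zero (Y := Y) j
  have hrow := @mem_iff_lt_rowLen Y i j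
  have hcol := @mem_iff_lt_colLen Y i j
  unfold nonBeta beta
  by_cases hij : (i, j) ∈ Y <;> simp only [hij, true_iff, false_iff] at hrow hcol ⊢ <;> omega

theorem hook_eq_beta_sub_nonBeta (h : (i, j) ∈ Y) : hook Y i j = Y.beta i - Y.nonBeta j := by
  have hc := colLen_le_colLen_zero (Y := Y) j
  have := mem_iff_lt_rowLen.1 h
  have := mem_iff_lt_colLen.1 h
  unfold hook beta nonBeta
  omega

theorem nonBeta_notMem_betaSet (j : ℕ) : Y.nonBeta j ∉ betaSet Y := by
  rw [mem_betaSet]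
  rintro ⟨i, hi, h⟩
  have hc := colLen_le_colLen_zero (Y := Y) j
  have hrow := @mem_iff_lt_rowLen Y i j
  have hcol := @mem_iff_lt_colLen Y i j
  unfold nonBeta beta at *
  by_cases hij : (i, j) ∈ Y <;> simp only [hij, true_iff, false_iff] at hrow hcol <;> omega

/-- The rows `i` with `colLen (j + 1) ≤ i < colLen j` have length `j + 1`, and their beta-numbers
fill the gap between two consecutive non-beta-numbers. -/
theorem mem_betaSet_of_nonBeta_lt_of_lt_nonBeta (h₁ : Y.nonBeta j < w)
    (h₂ : w < Y.nonBeta (j + 1)) : w ∈ betaSet Y := by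
  have hc := colLen_le_colLen_zero (Y := Y) j
  have hc' := Y.colLen_anti j (j + 1) j.le_succ
  unfold nonBeta at h₁ h₂
  set i := j + Y.colLen 0 - w
  have hin : (i, j) ∈ Y := mem_iff_lt_colLen.2 (by omega)
  have hout : (i, j + 1) ∉ Y := by rw [mem_iff_lt_colLen]; omega
  rw [mem_iff_lt_rowLen] at hin hout
  exact mem_betaSet.2 ⟨i, by omega, by unfold beta; omega⟩

theorem notMem_betaSet_iff : w ∉ betaSet Y ↔ ∃ j, Y.nonBeta j = w := by
  refine ⟨fun hw => ?_, fun ⟨j, hj⟩ => hj ▸ nonBeta_notMem_betaSet j⟩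
  have key : ∀ j, (∃ j', Y.nonBeta j' = w) ∨ Y.nonBeta j < w := by
    intro j
    induction j with
    | zero =>
      rcases Nat.eq_zero_or_pos w with rfl | hw
      · exact .inl ⟨0, by simp [nonBeta]⟩
      · exact .inr (by simpa [nonBeta])
    | succ j ih =>
      refine ih.elim .inl fun hlt => ?_
      rcases lt_trichotomy (Y.nonBeta (j + 1)) w with h | h | h
      · exact .inr h
      · exact .inl ⟨_, h⟩
      · exact absurd (mem_betaSet_of_nonBeta_lt_of_lt_nonBeta hlt h) hw
  exact (key w).resolve_right (by unfold nonBeta; omega)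

theorem isCore_iff_subClosed : IsCore Y t ↔ SubClosed t (betaSet Y) := by
  constructor
  · intro hcore x hx htx
    by_contra hxt
    obtain ⟨j, hj⟩ := notMem_betaSet_iff.1 hxt
    obtain ⟨i, hi, rfl⟩ := mem_betaSet.1 hx
    have ht : t ≠ 0 := by rintro rfl; exact hxt hx
    have hij : (i, j) ∈ Y := (mem_iff_nonBeta_lt_beta hi).2 (by omega)
    refine hcore (i, j) ((mem_cells _).2 hij) ?_
    rw [hook_eq_beta_sub_nonBeta hij, hj, Nat.sub_sub_self htx]
  · rintro hB ⟨i, j⟩ hij ⟨m, hm⟩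
    rw [mem_cells] at hij
    have hi : i < Y.colLen 0 := lt_colLen_zero_iff.2 (by have := mem_iff_lt_rowLen.1 hij; omega)
    have hlt := (mem_iff_nonBeta_lt_beta hi).1 hij
    rw [hook_eq_beta_sub_nonBeta hij, mul_comm] at hm
    have := hB.sub_mul_mem (mem_betaSet.2 ⟨i, hi, rfl⟩) (m := m) (by omega)
    rw [← hm, Nat.sub_sub_self hlt.le] at this
    exact nonBeta_notMem_betaSet j this

theorem card_betaSet (Y : YoungDiagram) : #(betaSet Y) = Y.colLen 0 := by
  refine (card_image_of_injOn fun a ha b hb hab => ?_).trans (card_range _)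
  simp only [coe_range, Set.mem_Iio] at ha hb
  by_contra hne
  rcases Nat.lt_or_gt_of_ne hne with h | h
  · exact (beta_lt_beta h hb).ne' hab
  · exact (beta_lt_beta h ha).ne hab

theorem orderEmbOfFin_eq_beta {B : Finset ℕ} (hB : betaSet Y = B) {k : ℕ} (h : #B = k)
    (m : Fin k) : B.orderEmbOfFin h m = Y.beta (k - 1 - m) := by
  subst hB
  have hk : Y.colLen 0 = k := (card_betaSet Y).symm.trans h
  refine (congrFun (orderEmbOfFin_unique h (f := fun m : Fin k => Y.beta (k - 1 - m))
    (fun m => ?_) fun a b hab => ?_) m).symm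
  · exact mem_betaSet.2 ⟨_, by omega, rfl⟩
  · exact beta_lt_beta (by rw [Fin.lt_def] at hab; omega) (by omega)

theorem ext_of_rowLen {Y₁ Y₂ : YoungDiagram} (h : ∀ i, Y₁.rowLen i = Y₂.rowLen i) : Y₁ = Y₂ :=
  YoungDiagram.ext <| Finset.ext fun ⟨i, j⟩ => by
    rw [mem_cells, mem_cells, mem_iff_lt_rowLen, mem_iff_lt_rowLen, h]

theorem rowLen_eq_zero_of_le (h : Y.colLen 0 ≤ i) : Y.rowLen i = 0 :=
  Nat.eq_zero_of_not_pos (mt lt_colLen_zero_iff.2 (by omega))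

theorem betaSet_injective : Function.Injective betaSet := by
  intro Y₁ Y₂ h
  have hk : Y₂.colLen 0 = Y₁.colLen 0 := by rw [← card_betaSet, ← h, card_betaSet]
  refine ext_of_rowLen fun i => ?_
  by_cases hi : i < Y₁.colLen 0
  · have hβ := (orderEmbOfFin_eq_beta rfl (card_betaSet Y₁) ⟨Y₁.colLen 0 - 1 - i, by omega⟩).symm
      |>.trans (orderEmbOfFin_eq_beta h.symm _ _)
    simp only [Nat.sub_sub_self (Nat.le_sub_one_of_lt hi)] at hβ
    unfold beta at hβ
    omega
  · rw [rowLen_eq_zero_of_le (by omega), rowLen_eq_zero_of_le (by omega)]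

/-- Read off the diagram from its beta-set: the `m`-th smallest element `e m` of `B` gives the row
of length `e m - m`. -/
theorem exists_betaSet_eq {B : Finset ℕ} (h0 : 0 ∉ B) : ∃ Y, betaSet Y = B := by
  set k := #B
  set e := B.orderEmbOfFin rfl
  have he : ∀ m : Fin k, (m : ℕ) + 1 ≤ e m := fun m => by
    have hk : 0 < k := m.pos
    have h1 := Fin.add_sub_le_of_strictMono e.strictMono (a := ⟨0, hk⟩) (Fin.le_def.2 m.val.zero_le)
    have h2 : e ⟨0, hk⟩ ≠ 0 := fun h => h0 (h ▸ B.orderEmbOfFin_mem rfl _)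
    simp only at h1
    omega
  set w := List.ofFn fun i : Fin k => e i.rev - i.rev
  have hw : w.SortedGE := List.sortedGE_ofFn_iff.2 fun a b hab => by
    have := Fin.add_sub_le_of_strictMono e.strictMono (Fin.rev_le_rev.2 hab)
    simp only [Fin.val_rev] at *
    omega
  have hpos : ∀ x ∈ w, 0 < x := by
    simp only [w, List.mem_ofFn, forall_exists_index, forall_apply_eq_imp_iff]
    intro i
    have := he i.rev
    omega
  refine ⟨ofRowLens w hw, ?_⟩
  have hk : (ofRowLens w hw).colLen 0 = k := by
    rw [← length_rowLens, rowLens_ofRowLens_eq_self hpos, List.length_ofFn]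
  have hβ : ∀ i : Fin k, (ofRowLens w hw).beta i = e i.rev := fun i => by
    have hrow : (ofRowLens w hw).rowLen i = e i.rev - i.rev :=
      (rowLen_ofRowLens (i.cast List.length_ofFn.symm)).trans (List.getElem_ofFn _)
    have := he i.rev
    rw [beta, hrow, hk]
    simp only [Fin.val_rev] at this ⊢
    omega
  ext x
  rw [mem_betaSet, hk, ← Finset.mem_coe, ← range_orderEmbOfFin B rfl, Set.mem_range]
  constructor
  · rintro ⟨i, hi, rfl⟩
    exact ⟨Fin.rev ⟨i, hi⟩, (hβ ⟨i, hi⟩).symm⟩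
  · rintro ⟨m, rfl⟩
    exact ⟨m.rev, m.rev.2, by rw [hβ, Fin.rev_rev]⟩

theorem beta_add_two_le_of_distinctParts (hY : DistinctParts Y) (h : i < i')
    (h' : i' < Y.colLen 0) : Y.beta i' + 2 ≤ Y.beta i := by
  have h1 := hY i (lt_colLen_zero_iff.1 (by omega))
  have h2 := Y.rowLen_anti (i + 1) i' h
  unfold beta
  omega

theorem distinctParts_iff_consecutiveFree : DistinctParts Y ↔ ConsecutiveFree (betaSet Y) := by
  constructor
  · intro hY x hx hx1
    obtain ⟨i, hi, rfl⟩ := mem_betaSet.1 hx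
    obtain ⟨i', hi', hii'⟩ := mem_betaSet.1 hx1
    rcases lt_trichotomy i' i with h | rfl | h
    · have := beta_add_two_le_of_distinctParts hY h hi; omega
    · omega
    · have := beta_lt_beta h hi'; omega
  · intro hB i hi
    by_contra hle
    have hi1 : i + 1 < Y.colLen 0 := lt_colLen_zero_iff.2 hi
    have := Y.rowLen_anti i (i + 1) i.le_succ
    refine hB _ (mem_betaSet.2 ⟨i + 1, hi1, rfl⟩) (mem_betaSet.2 ⟨i, by omega, ?_⟩)
    unfold beta
    omega

end YoungDiagram

/-- Bead counts of an abacus word, for the runners `1, …, n - 1` of an `n`-abacus: at most `d`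
beads per runner, never two adjacent nonempty runners, and fewer than `d` beads on the last
runner, whose `d`-th bead would sit at `d * n - 1`. -/
def IsAdmissible (d : ℕ) (l : List ℕ) : Prop :=
  (∀ r, l.getD r 0 ≤ d) ∧ (∀ r, l.getD r 0 = 0 ∨ l.getD (r + 1) 0 = 0) ∧
    l.getD (l.length - 1) 0 < d

theorem isAdmissible_nil {d : ℕ} : IsAdmissible d [] ↔ 0 < d := by
  simp [IsAdmissible]

theorem isAdmissible_cons_cons {d a b : ℕ} {t : List ℕ} :
    IsAdmissible d (a :: b :: t) ↔ a ≤ d ∧ (a = 0 ∨ b = 0) ∧ IsAdmissible d (b :: t) := by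
  unfold IsAdmissible
  rw [← Nat.and_forall_add_one, ← Nat.and_forall_add_one (p := fun r => _ ∨ _)]
  simp only [List.getD_cons_zero, List.getD_cons_succ, List.length_cons, Nat.add_sub_cancel]
  tauto

theorem isAdmissible_singleton {d a : ℕ} : IsAdmissible d [a] ↔ a < d := by
  unfold IsAdmissible
  rw [← Nat.and_forall_add_one, ← Nat.and_forall_add_one (p := fun r => _ ∨ _)]
  simp only [List.getD_cons_zero, List.getD_cons_succ, List.getD_nil, List.length_singleton,
    Nat.sub_self]
  simp only [zero_le, implies_true, or_true, and_true, true_and]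
  exact and_iff_right_of_imp le_of_lt

theorem isAdmissible_zero_cons {d : ℕ} {t : List ℕ} :
    IsAdmissible d (0 :: t) ↔ IsAdmissible d t := by
  cases t with
  | nil => rw [isAdmissible_singleton, isAdmissible_nil]
  | cons b t => simp [isAdmissible_cons_cons]

def admissibleWords (d : ℕ) : ℕ → Finset (List ℕ)
  | 0 => {[]}
  | 1 => (range d).image fun c => [c]
  | m + 2 => (admissibleWords d (m + 1)).image (0 :: ·) ∪
      (range d ×ˢ admissibleWords d m).image fun p => (p.1 + 1) :: 0 :: p.2

theorem mem_admissibleWords {d : ℕ} (hd : 0 < d) :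
    ∀ (m : ℕ) (l : List ℕ), l ∈ admissibleWords d m ↔ l.length = m ∧ IsAdmissible d l
  | 0, l => by cases l <;> simp [admissibleWords, isAdmissible_nil, hd]
  | 1, l => by
    simp only [admissibleWords, mem_image, mem_range, List.length_eq_one_iff]
    constructor
    · rintro ⟨a, ha, rfl⟩
      exact ⟨⟨a, rfl⟩, isAdmissible_singleton.2 ha⟩
    · rintro ⟨⟨a, rfl⟩, h⟩
      exact ⟨a, isAdmissible_singleton.1 h, rfl⟩
  | m + 2, [] => by simp [admissibleWords]
  | m + 2, [a] => by simp [admissibleWords, mem_admissibleWords hd (m + 1)]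
  | m + 2, a :: b :: t => by
    rcases a with _ | c
    · simp [admissibleWords, mem_admissibleWords hd (m + 1), isAdmissible_cons_cons]
    · simp only [admissibleWords, mem_union, mem_image, List.cons.injEq, Nat.right_eq_add,
        Nat.add_eq_zero_iff, one_ne_zero, and_false, false_and, exists_const, mem_product,
        mem_range, mem_admissibleWords hd m, Nat.add_right_cancel_iff, Prod.exists, ↓existsAndEq,
        and_true, true_and, false_or, List.length_cons, isAdmissible_cons_cons,
        Order.add_one_le_iff]
      constructor
      · rintro ⟨⟨hc, hl, ht⟩, rfl⟩
        exact ⟨hl, hc, rfl, isAdmissible_zero_cons.2 ht⟩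
      · rintro ⟨hl, hc, rfl, ht⟩
        exact ⟨⟨hc, hl, isAdmissible_zero_cons.1 ht⟩, rfl⟩

theorem card_admissibleWords_zero (d : ℕ) : #(admissibleWords d 0) = 1 := rfl

theorem card_admissibleWords_one (d : ℕ) : #(admissibleWords d 1) = d := by
  rw [admissibleWords, card_image_of_injective _ List.singleton_injective, card_range]

theorem card_admissibleWords_add_two (d m : ℕ) :
    #(admissibleWords d (m + 2)) = #(admissibleWords d (m + 1)) + d * #(admissibleWords d m) := by
  rw [admissibleWords, card_union_of_disjoint, card_image_of_injective _ (List.cons_injective),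
    card_image_of_injective, card_product, card_range]
  · rintro ⟨a₁, l₁⟩ ⟨a₂, l₂⟩ h
    simp_all
  · simp [disjoint_left]

/-- Runner `r + 1` of the `n`-abacus carries `l.getD r 0` beads; runner `0` is empty. -/
def abacus (n : ℕ) (l : List ℕ) : Finset ℕ :=
  (range l.length).biUnion fun r => (range (l.getD r 0)).image fun j => r + 1 + j * n

section Abacus

variable {n d : ℕ} {l : List ℕ} {B : Finset ℕ} {x : ℕ}

theorem mem_abacus : x ∈ abacus n l ↔ ∃ r < l.length, ∃ j < l.getD r 0, r + 1 + j * n = x := by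
  simp [abacus]

theorem add_mul_mem_abacus_iff (hl : l.length < n) {r j : ℕ} (hr : r + 1 < n) :
    r + 1 + j * n ∈ abacus n l ↔ j < l.getD r 0 := by
  rw [mem_abacus]
  constructor
  · rintro ⟨r', hr', j', hj', h⟩
    obtain ⟨h₁, rfl⟩ := Nat.eq_and_eq_of_add_mul_eq (by omega) hr h
    rwa [← Nat.succ_injective h₁]
  · intro hj
    have hrl : r < l.length := by
      by_contra hrl
      rw [List.getD_eq_default _ _ (by omega)] at hj
      omega
    exact ⟨r, hrl, j, hj, rfl⟩

theorem zero_notMem_abacus : 0 ∉ abacus n l := by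
  simp [mem_abacus]

theorem subClosed_abacus (hl : l.length < n) : SubClosed n (abacus n l) := by
  intro x hx hnx
  obtain ⟨r, hr, j, hj, rfl⟩ := mem_abacus.1 hx
  rcases j with _ | j
  · omega
  refine mem_abacus.2 ⟨r, hr, j, by omega, ?_⟩
  rw [Nat.succ_mul]
  omega

theorem abacus_inj {l₁ l₂ : List ℕ} (hlen : l₁.length = l₂.length) (hl : l₁.length < n)
    (h : abacus n l₁ = abacus n l₂) : l₁ = l₂ := by
  refine List.ext_getElem hlen fun r hr₁ hr₂ => ?_
  have key : ∀ j, j < l₁.getD r 0 ↔ j < l₂.getD r 0 := fun j => by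
    rw [← add_mul_mem_abacus_iff hl (by omega), h,
      add_mul_mem_abacus_iff (n := n) (by omega) (by omega)]
  rw [← List.getD_eq_getElem _ 0 hr₁, ← List.getD_eq_getElem _ 0 hr₂]
  exact eq_of_forall_lt_iff key

theorem exists_abacus_eq (hn : 0 < n) (h0 : 0 ∉ B) (hB : SubClosed n B) :
    ∃ l, l.length = n - 1 ∧ abacus n l = B := by
  have hrunner : ∀ r, ∃ a, ∀ j, r + 1 + j * n ∈ B ↔ j < a := fun r => by
    refine Nat.exists_forall_iff_lt (fun j hj => ?_) ⟨B.sup id + 1, fun hmem => ?_⟩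
    · have := hB _ hj (by rw [Nat.succ_mul]; omega)
      rwa [Nat.succ_mul, ← Nat.add_assoc, Nat.add_sub_cancel] at this
    · have := le_sup (f := id) hmem
      have := Nat.le_mul_of_pos_right (B.sup id + 1) hn
      simp only [id] at *
      omega
  choose a ha using hrunner
  refine ⟨(List.range (n - 1)).map a, by simp, Finset.ext fun x => ?_⟩
  have hget : ∀ r, r < n - 1 → ((List.range (n - 1)).map a).getD r 0 = a r := fun r hr => by
    rw [List.getD_eq_getElem _ 0 (by simpa using hr), List.getElem_map, List.getElem_range]
  rw [mem_abacus]
  constructor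
  · rintro ⟨r, hr, j, hj, rfl⟩
    rw [List.length_map, List.length_range] at hr
    exact (ha r j).2 (hget r hr ▸ hj)
  · intro hx
    have hmod : x % n ≠ 0 := fun hmod => by
      have := hB.sub_mul_mem hx (m := x / n) (Nat.div_mul_le_self x n)
      rw [← Nat.mod_eq_sub_div_mul, hmod] at this
      exact h0 this
    have hx' : x % n - 1 + 1 + x / n * n = x := by
      have := Nat.mod_add_div' x n
      omega
    have hr : x % n - 1 < n - 1 := by have := Nat.mod_lt x hn; omega
    refine ⟨x % n - 1, by simpa using hr, x / n, ?_, hx'⟩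
    rw [hget _ hr, ← ha]
    rwa [hx']

theorem lt_of_mem_of_subClosed (hd : 0 < d) (hn : 0 < n) (h0 : 0 ∉ B) (hB : ConsecutiveFree B)
    (hBn : SubClosed n B) (hBdn : SubClosed (d * n - 1) B) (hx : x ∈ B) : x < d * n - 1 := by
  by_contra hle
  have h₁ := hBdn x hx (not_lt.1 hle)
  have hdn := Nat.mul_pos hd hn
  rcases (show x = d * n - 1 ∨ d * n ≤ x by omega) with rfl | hx'
  · exact h0 (by rwa [Nat.sub_self] at h₁)
  · have h₂ := hBn.sub_mul_mem hx (m := d) hx'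
    exact hB _ h₂ (by rwa [show x - d * n + 1 = x - (d * n - 1) by omega])

theorem IsAdmissible.lt_of_mem_abacus (h : IsAdmissible d l) (hl : l.length + 1 = n)
    (hx : x ∈ abacus n l) : x < d * n - 1 := by
  obtain ⟨hle, -, hlast⟩ := h
  obtain ⟨r, hr, j, hj, rfl⟩ := mem_abacus.1 hx
  have := hle r
  have hdn : (d - 1) * n + n = d * n := by rw [← Nat.succ_mul]; congr 1; omega
  rcases (show j + 1 ≤ d - 1 ∨ j = d - 1 by omega) with hj' | rfl
  · have := Nat.mul_le_mul_right n hj'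
    rw [Nat.succ_mul] at this
    omega
  · have : r ≠ l.length - 1 := by rintro rfl; omega
    omega

theorem IsAdmissible.consecutiveFree_abacus (h : IsAdmissible d l) (hl : l.length + 1 = n) :
    ConsecutiveFree (abacus n l) := by
  intro x hx hx₁
  obtain ⟨r, hr, j, hj, rfl⟩ := mem_abacus.1 hx
  rcases (show r + 2 < n ∨ r + 2 = n by omega) with hr₂ | hr₂
  · rw [show r + 1 + j * n + 1 = r + 1 + 1 + j * n by omega,
      add_mul_mem_abacus_iff (by omega) hr₂] at hx₁
    have := h.2.1 r
    omega
  · obtain ⟨r', hr', j', -, h⟩ := mem_abacus.1 hx₁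
    have := Nat.eq_and_eq_of_add_mul_eq (n := n) (a := r' + 1) (b := 0) (j' := j + 1)
      (by omega) (by omega) (by rw [h, Nat.succ_mul]; omega)
    omega

theorem isAdmissible_of_abacus (hd : 0 < d) (hl : l.length + 1 = n)
    (hC : ConsecutiveFree (abacus n l)) (hS : SubClosed (d * n - 1) (abacus n l)) :
    IsAdmissible d l := by
  have hlen : ∀ {r}, 0 < l.getD r 0 → r < l.length := fun {r} h => by
    by_contra hr
    rw [List.getD_eq_default _ _ (by omega)] at h
    omega
  have hmem : ∀ {r j}, j < l.getD r 0 → r + 1 + j * n ∈ abacus n l := fun {r j} hj =>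
    (add_mul_mem_abacus_iff (by omega) (by have := hlen (r := r) (by omega); omega)).2 hj
  have hbound := fun {x} (hx : x ∈ abacus n l) => lt_of_mem_of_subClosed hd (by omega)
    zero_notMem_abacus hC (subClosed_abacus (by omega)) hS hx
  have hdn : (d - 1) * n + n = d * n := by rw [← Nat.succ_mul]; congr 1; omega
  refine ⟨fun r => ?_, fun r => ?_, ?_⟩
  · by_contra hr
    have := hbound (hmem (r := r) (j := d) (by omega))
    omega
  · by_contra hr
    push Not at hr
    exact hC _ (hmem (r := r) (j := 0) (by omega))
      (by simpa using hmem (r := r + 1) (j := 0) (by omega))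
  · by_contra hlast
    have hr := hlen (r := l.length - 1) (by omega)
    have := hbound (hmem (r := l.length - 1) (j := d - 1) (by omega))
    omega

end Abacus

theorem image_betaSet_distinctParts_isCore (d n : ℕ) :
    betaSet '' {Y | DistinctParts Y ∧ IsCore Y n ∧ IsCore Y (d * n - 1)} =
      {B | 0 ∉ B ∧ ConsecutiveFree B ∧ SubClosed n B ∧ SubClosed (d * n - 1) B} := by
  ext B
  simp only [Set.mem_image, Set.mem_ofPred_eq, YoungDiagram.isCore_iff_subClosed,
    YoungDiagram.distinctParts_iff_consecutiveFree]
  constructor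
  · rintro ⟨Y, hY, rfl⟩
    exact ⟨YoungDiagram.zero_notMem_betaSet, hY⟩
  · rintro ⟨h0, hB⟩
    obtain ⟨Y, rfl⟩ := YoungDiagram.exists_betaSet_eq h0
    exact ⟨Y, hB, rfl⟩

theorem image_abacus_admissibleWords {d n : ℕ} (hd : 0 < d) (hn : 0 < n) :
    abacus n '' admissibleWords d (n - 1) =
      {B | 0 ∉ B ∧ ConsecutiveFree B ∧ SubClosed n B ∧ SubClosed (d * n - 1) B} := by
  ext B
  simp only [Set.mem_image, Finset.mem_coe, mem_admissibleWords hd, Set.mem_ofPred_eq]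
  constructor
  · rintro ⟨l, ⟨hlen, hl⟩, rfl⟩
    refine ⟨zero_notMem_abacus, hl.consecutiveFree_abacus (by omega), subClosed_abacus (by omega),
      fun x hx hx' => absurd hx' (not_le.2 (hl.lt_of_mem_abacus (by omega) hx))⟩
  · rintro ⟨h0, hC, hBn, hS⟩
    obtain ⟨l, hlen, rfl⟩ := exists_abacus_eq hn h0 hBn
    exact ⟨l, ⟨hlen, isAdmissible_of_abacus hd (by omega) hC hS⟩, rfl⟩

theorem ncount_eq_card_admissibleWords {d n : ℕ} (hd : 0 < d) (hn : 0 < n) :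
    Ncount d n = #(admissibleWords d (n - 1)) := by
  have hinj : Set.InjOn (abacus n) (admissibleWords d (n - 1)) := fun l₁ h₁ l₂ h₂ h => by
    rw [Finset.mem_coe, mem_admissibleWords hd] at h₁ h₂
    exact abacus_inj (h₁.1.trans h₂.1.symm) (by omega) h
  rw [Ncount, ← YoungDiagram.betaSet_injective.injOn.ncard_image,
    image_betaSet_distinctParts_isCore, ← image_abacus_admissibleWords hd hn, hinj.ncard_image,
    Set.ncard_coe_finset]

theorem straub (d : ℕ) (hd : 1 ≤ d) :
    Ncount d 1 = 1 ∧ Ncount d 2 = d ∧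
      ∀ n : ℕ, 3 ≤ n → Ncount d n = Ncount d (n - 1) + d * Ncount d (n - 2) := by
  refine ⟨?_, ?_, fun n hn => ?_⟩
  · exact (ncount_eq_card_admissibleWords hd one_pos).trans (card_admissibleWords_zero d)
  · exact (ncount_eq_card_admissibleWords hd two_pos).trans (card_admissibleWords_one d)
  · obtain ⟨m, rfl⟩ : ∃ m, n = m + 3 := ⟨n - 3, by omega⟩
    rw [ncount_eq_card_admissibleWords hd (by omega), ncount_eq_card_admissibleWords hd (by omega),
      ncount_eq_card_admissibleWords hd (by omega)]
    exact card_admissibleWords_add_two d m
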